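/- arXiv:1804.08512 — 2 statements merged into one kernel-verified Lean document; each statement's English description precedes it below -/
import Mathlib

section
/- Let G ∈ H^∞_{m×p} with T_G T_G* strictly positive. Then the function Ξ(z) = Y(z)Ξ₀ satisfies Ξ(z) = E_p*(I − z S_p*)⁻¹ T_G*(T_G T_G*)⁻¹ E_m for every z ∈ 𝔻. -/
/-!
Setting: `l2 n` models ℓ²₊(ℂⁿ); `lp.single 2 0` is the canonical embedding `E_n`, and
evaluating a sequence at coordinate `k` realizes `E_n* (S_n*)^k`.  Block Toeplitz and
Hankel operators, as well as the (bounded) inverse of `T_G T_G*`, are specified through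
their actions on the standard basis vectors of the coordinate spaces.
-/

noncomputable section
open scoped Matrix

/-- ℂⁿ with the Euclidean norm. -/
abbrev ES (n : ℕ) : Type := EuclideanSpace ℂ (Fin n)

/-- ℓ²₊(ℂⁿ). -/
abbrev l2 (n : ℕ) : Type := lp (fun _ : ℕ => ES n) 2

/-- The `b`-th standard basis vector of ℂⁿ. -/
abbrev eVec (n : ℕ) (b : Fin n) : ES n := EuclideanSpace.single b 1

/-- The matrix function `z ↦ ∑' ν, z ^ ν • F ν` determined by a coefficient sequence. -/
def seriesM {r s : ℕ} (F : ℕ → Matrix (Fin r) (Fin s) ℂ) (z : ℂ) :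
    Matrix (Fin r) (Fin s) ℂ :=
  Matrix.of fun a b => ∑' ν : ℕ, z ^ ν * F ν a b

/-!
Let `x = T_G*(T_G T_G*)⁻¹ E_m e_b`, so that `T_G x = E_m e_b` and `x₀ = Ξ₀ e_b`. Block Toeplitz and
Hankel operators are tied together by `S_m* T_G = T_G S_p* + H_G E_p E_p*`, while `T_G*` intertwines
the backward shifts. Applying this to `x` gives `T_G T_G* S_m* u = -H_G E_p x₀` for
`u = (T_G T_G*)⁻¹ E_m e_b`, hence `S_p* x = -T_G*(T_G T_G*)⁻¹ H_G E_p Ξ₀ e_b`. Expanding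
`∑ zⁱ xᵢ = x₀ + z ∑ zⁱ (S_p* x)ᵢ` then yields exactly `Y(z) Ξ₀ e_b`.
-/

open scoped ENNReal InnerProductSpace

section Coordinates

variable {n : ℕ}

lemma l2_apply_eq_inner (v : l2 n) (i : ℕ) (c : Fin n) :
    v i c = ⟪(lp.single 2 i (eVec n c) : l2 n), v⟫_ℂ := by
  simp [lp.inner_single_left, EuclideanSpace.inner_single_left]

lemma norm_l2_apply_apply_le (v : l2 n) (i : ℕ) (c : Fin n) : ‖v i c‖ ≤ ‖v‖ :=
  calc ‖v i c‖ ≤ ‖v i‖ := PiLp.norm_apply_le (v i) c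
    _ ≤ ‖v‖ := lp.norm_apply_le_norm (by norm_num) v i

lemma summable_pow_mul_l2_apply (v : l2 n) (c : Fin n) {z : ℂ} (hz : ‖z‖ < 1) :
    Summable fun i : ℕ => z ^ i * v i c := by
  refine Summable.of_norm_bounded
    ((summable_geometric_of_lt_one (norm_nonneg z) hz).mul_left ‖v‖) fun i => ?_
  rw [norm_mul, norm_pow, mul_comm]
  exact mul_le_mul_of_nonneg_right (norm_l2_apply_apply_le v i c) (by positivity)

lemma finset_sum_smul_l2_apply {ι : Type*} (s : Finset ι) (f : ι → ℂ) (v : ι → l2 n)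
    (i : ℕ) (a : Fin n) : (∑ c ∈ s, f c • v c) i a = ∑ c ∈ s, f c * v c i a := by
  rw [lp.coeFn_sum]
  simp [Finset.sum_apply]

lemma tsum_pow_mul_finset_sum_smul_apply {z : ℂ} (hz : ‖z‖ < 1) {ι : Type*} (s : Finset ι)
    (f : ι → ℂ) (v : ι → l2 n) (a : Fin n) :
    ∑' i, z ^ i * (∑ c ∈ s, f c • v c) i a = ∑ c ∈ s, f c * ∑' i, z ^ i * v c i a := by
  simp only [finset_sum_smul_l2_apply, Finset.mul_sum, ← tsum_mul_left]
  rw [← Summable.tsum_finsetSum fun c _ => (summable_pow_mul_l2_apply (v c) a hz).mul_left (f c)]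
  exact tsum_congr fun i => Finset.sum_congr rfl fun c _ => by ring

lemma lp_single_eq_sum (j : ℕ) (w : ES n) :
    (lp.single 2 j w : l2 n) = ∑ c, w c • (lp.single 2 j (eVec n c) : l2 n) := by
  conv_lhs => rw [← (EuclideanSpace.basisFun (Fin n) ℂ).sum_repr w]
  rw [← lp.singleAddMonoidHom_apply, map_sum]
  simp [lp.single_smul]

def backShift (v : l2 n) : l2 n :=
  ⟨fun k => v (k + 1), by
    have h : Summable fun k : ℕ => ‖v k‖ ^ (2 : ℝ≥0∞).toReal :=
      (memℓp_gen_iff (by norm_num)).mp (lp.memℓp v)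
    exact memℓp_gen (h.comp_injective fun _ _ hab => by omega)⟩

@[simp] lemma backShift_apply (v : l2 n) (k : ℕ) : backShift v k = v (k + 1) := rfl

@[simp] lemma backShift_single_zero (w : ES n) : backShift (lp.single 2 0 w : l2 n) = 0 := by
  ext k : 2
  simp

lemma tsum_pow_mul_l2_apply {z : ℂ} (hz : ‖z‖ < 1) (v : l2 n) (c : Fin n) :
    ∑' i, z ^ i * v i c = v 0 c + z * ∑' i, z ^ i * backShift v i c := by
  rw [(summable_pow_mul_l2_apply v c hz).tsum_eq_zero_add, ← tsum_mul_left]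
  simp only [pow_zero, one_mul, pow_succ, backShift_apply]
  congr 1
  exact tsum_congr fun i => by ring

end Coordinates

lemma adjoint_l2_apply {m p : ℕ} (A : l2 p →L[ℂ] l2 m) (y : l2 m) (i : ℕ) (c : Fin p) :
    A.adjoint y i c = ⟪A (lp.single 2 i (eVec p c)), y⟫_ℂ := by
  rw [l2_apply_eq_inner, ContinuousLinearMap.adjoint_inner_right]

section Toeplitz

variable {m p : ℕ} {G : ℕ → Matrix (Fin m) (Fin p) ℂ} {TG : l2 p →L[ℂ] l2 m}

lemma toeplitz_apply
    (hTG : ∀ (j : ℕ) (b : Fin p) (i : ℕ) (a : Fin m),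
      (TG (lp.single 2 j (eVec p b))) i a = if j ≤ i then G (i - j) a b else 0)
    (v : l2 p) (i : ℕ) (a : Fin m) :
    TG v i a = ∑ j ∈ Finset.range (i + 1), ∑ c, G (i - j) a c * v j c := by
  have hrow : ∀ j c, TG.adjoint (lp.single 2 i (eVec m a)) j c
      = if j ≤ i then star (G (i - j) a c) else 0 := by
    intro j c
    rw [adjoint_l2_apply, lp.inner_single_right, EuclideanSpace.inner_single_right, hTG]
    split_ifs <;> simp
  rw [l2_apply_eq_inner, ← ContinuousLinearMap.adjoint_inner_left, lp.inner_eq_tsum,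
    tsum_eq_sum (s := Finset.range (i + 1)) fun j hj => ?_]
  · refine Finset.sum_congr rfl fun j hj => ?_
    rw [PiLp.inner_apply]
    refine Finset.sum_congr rfl fun c _ => ?_
    rw [hrow, if_pos (by simp at hj; omega)]
    simp [mul_comm]
  · rw [PiLp.inner_apply]
    refine Finset.sum_eq_zero fun c _ => ?_
    rw [hrow, if_neg (by simp at hj; omega)]
    simp

lemma adjoint_backShift
    (hTG : ∀ (j : ℕ) (b : Fin p) (i : ℕ) (a : Fin m),
      (TG (lp.single 2 j (eVec p b))) i a = if j ≤ i then G (i - j) a b else 0)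
    (y : l2 m) : TG.adjoint (backShift y) = backShift (TG.adjoint y) := by
  ext j c
  have hcol : ∀ k a, TG (lp.single 2 (j + 1) (eVec p c)) (k + 1) a
      = TG (lp.single 2 j (eVec p c)) k a := by
    intro k a
    simp [hTG]
  have hcol0 : TG (lp.single 2 (j + 1) (eVec p c)) 0 = 0 := by
    ext a
    simp [hTG]
  rw [backShift_apply, adjoint_l2_apply, adjoint_l2_apply, lp.inner_eq_tsum, lp.inner_eq_tsum,
    (lp.summable_inner (𝕜 := ℂ) _ y).tsum_eq_zero_add, hcol0, inner_zero_left, zero_add]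
  refine tsum_congr fun k => ?_
  simp only [PiLp.inner_apply, backShift_apply, hcol]

variable {HG : l2 p →L[ℂ] l2 m}

lemma hankel_single_apply
    (hHG : ∀ (j : ℕ) (b : Fin p) (i : ℕ) (a : Fin m),
      (HG (lp.single 2 j (eVec p b))) i a = G (i + j + 1) a b)
    (j : ℕ) (w : ES p) (i : ℕ) (a : Fin m) :
    HG (lp.single 2 j w) i a = ∑ c, G (i + j + 1) a c * w c := by
  simp only [lp_single_eq_sum j w, map_sum, map_smul, finset_sum_smul_l2_apply, hHG, mul_comm]

lemma toeplitz_backShift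
    (hTG : ∀ (j : ℕ) (b : Fin p) (i : ℕ) (a : Fin m),
      (TG (lp.single 2 j (eVec p b))) i a = if j ≤ i then G (i - j) a b else 0)
    (hHG : ∀ (j : ℕ) (b : Fin p) (i : ℕ) (a : Fin m),
      (HG (lp.single 2 j (eVec p b))) i a = G (i + j + 1) a b)
    (v : l2 p) : TG (backShift v) = backShift (TG v) - HG (lp.single 2 0 (v 0)) := by
  ext i a
  have hsub : (backShift (TG v) - HG (lp.single 2 0 (v 0))) i a
      = TG v (i + 1) a - HG (lp.single 2 0 (v 0)) i a := rfl
  rw [hsub, toeplitz_apply hTG, toeplitz_apply hTG, hankel_single_apply hHG,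
    Finset.sum_range_succ' _ (i + 1)]
  simp

variable {Tinv : l2 m →L[ℂ] l2 m}

lemma backShift_adjoint_eq_neg
    (hTG : ∀ (j : ℕ) (b : Fin p) (i : ℕ) (a : Fin m),
      (TG (lp.single 2 j (eVec p b))) i a = if j ≤ i then G (i - j) a b else 0)
    (hHG : ∀ (j : ℕ) (b : Fin p) (i : ℕ) (a : Fin m),
      (HG (lp.single 2 j (eVec p b))) i a = G (i + j + 1) a b)
    (hT1 : ∀ x, Tinv (TG (TG.adjoint x)) = x) {u : l2 m} {e : ES m}
    (hu : TG (TG.adjoint u) = lp.single 2 0 e) :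
    backShift (TG.adjoint u) = -TG.adjoint (Tinv (HG (lp.single 2 0 (TG.adjoint u 0)))) :=
  calc backShift (TG.adjoint u)
      = TG.adjoint (Tinv (TG (TG.adjoint (backShift u)))) := by
        rw [hT1, adjoint_backShift hTG]
    _ = -TG.adjoint (Tinv (HG (lp.single 2 0 (TG.adjoint u 0)))) := by
        rw [adjoint_backShift hTG, toeplitz_backShift hTG hHG, hu, backShift_single_zero,
          zero_sub, map_neg, map_neg]

end Toeplitz

theorem bezout_corona_stmt5_general
    (m p : ℕ)
    (G : ℕ → Matrix (Fin m) (Fin p) ℂ)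
    (TG : l2 p →L[ℂ] l2 m)
    (hTG : ∀ (j : ℕ) (b : Fin p) (i : ℕ) (a : Fin m),
      (TG (lp.single 2 j (eVec p b))) i a = if j ≤ i then G (i - j) a b else 0)
    (HG : l2 p →L[ℂ] l2 m)
    (hHG : ∀ (j : ℕ) (b : Fin p) (i : ℕ) (a : Fin m),
      (HG (lp.single 2 j (eVec p b))) i a = G (i + j + 1) a b)
    (Tinv : l2 m →L[ℂ] l2 m)
    (hT1 : ∀ x, Tinv (TG (TG.adjoint x)) = x)
    (hT2 : ∀ x, TG (TG.adjoint (Tinv x)) = x)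
    (Ξ₀ : Matrix (Fin p) (Fin m) ℂ)
    (hΞ₀ : ∀ (a : Fin p) (b : Fin m),
      Ξ₀ a b = (TG.adjoint (Tinv (lp.single 2 0 (eVec m b)))) 0 a)
    (Y : ℂ → Matrix (Fin p) (Fin p) ℂ)
    (hY : ∀ z ∈ Metric.ball (0 : ℂ) 1, ∀ (a b : Fin p),
      Y z a b = (if a = b then 1 else 0)
        - z * ∑' i : ℕ, z ^ i *
            (TG.adjoint (Tinv (HG (lp.single 2 0 (eVec p b))))) i a) :
    ∀ z ∈ Metric.ball (0 : ℂ) 1, ∀ (a : Fin p) (b : Fin m),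
      (Y z * Ξ₀) a b
        = ∑' i : ℕ, z ^ i * (TG.adjoint (Tinv (lp.single 2 0 (eVec m b)))) i a := by
  intro z hz a b
  have hz' : ‖z‖ < 1 := by simpa using hz
  set x := TG.adjoint (Tinv (lp.single 2 0 (eVec m b)))
  set W : Fin p → l2 p := fun c => TG.adjoint (Tinv (HG (lp.single 2 0 (eVec p c))))
  have hshift : backShift x = -∑ c, Ξ₀ c b • W c := by
    rw [backShift_adjoint_eq_neg hTG hHG hT1 (hT2 _), lp_single_eq_sum]
    simp only [map_sum, map_smul, hΞ₀, W]
  have hYΞ₀ : (Y z * Ξ₀) a b = Ξ₀ a b - z * ∑ c, Ξ₀ c b * ∑' i, z ^ i * W c i a := by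
    simp only [Matrix.mul_apply, hY z hz, sub_mul, Finset.sum_sub_distrib, ite_mul, one_mul,
      zero_mul, Finset.sum_ite_eq, Finset.mem_univ, if_true, Finset.mul_sum, W]
    congr 1
    exact Finset.sum_congr rfl fun c _ => by ring
  have hneg : ∀ i, z ^ i * (-∑ c, Ξ₀ c b • W c) i a = -(z ^ i * (∑ c, Ξ₀ c b • W c) i a) :=
    fun i => by simp
  rw [hYΞ₀, tsum_pow_mul_l2_apply hz', hshift, tsum_congr hneg, tsum_neg,
    tsum_pow_mul_finset_sum_smul_apply hz', hΞ₀]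
  ring

/-- The function `Ξ(z) = Y(z)Ξ₀` is also given by
`Ξ(z) = E_p*(I − z S_p*)⁻¹ T_G*(T_G T_G*)⁻¹ E_m` for every `z ∈ 𝔻`. -/
theorem bezout_corona_stmt5
    (m p : ℕ) (hm : 0 < m) (hmp : m ≤ p)
    (G : ℕ → Matrix (Fin m) (Fin p) ℂ)
    (TG : l2 p →L[ℂ] l2 m)
    (hTG : ∀ (j : ℕ) (b : Fin p) (i : ℕ) (a : Fin m),
      (TG (lp.single 2 j (eVec p b))) i a = if j ≤ i then G (i - j) a b else 0)
    (HG : l2 p →L[ℂ] l2 m)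
    (hHG : ∀ (j : ℕ) (b : Fin p) (i : ℕ) (a : Fin m),
      (HG (lp.single 2 j (eVec p b))) i a = G (i + j + 1) a b)
    (Tinv : l2 m →L[ℂ] l2 m)
    (hT1 : ∀ x, Tinv (TG (TG.adjoint x)) = x)
    (hT2 : ∀ x, TG (TG.adjoint (Tinv x)) = x)
    (Ξ₀ : Matrix (Fin p) (Fin m) ℂ)
    (hΞ₀ : ∀ (a : Fin p) (b : Fin m),
      Ξ₀ a b = (TG.adjoint (Tinv (lp.single 2 0 (eVec m b)))) 0 a)
    (Y : ℂ → Matrix (Fin p) (Fin p) ℂ)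
    (hY : ∀ z ∈ Metric.ball (0 : ℂ) 1, ∀ (a b : Fin p),
      Y z a b = (if a = b then 1 else 0)
        - z * ∑' i : ℕ, z ^ i *
            (TG.adjoint (Tinv (HG (lp.single 2 0 (eVec p b))))) i a) :
    ∀ z ∈ Metric.ball (0 : ℂ) 1, ∀ (a : Fin p) (b : Fin m),
      (Y z * Ξ₀) a b
        = ∑' i : ℕ, z ^ i * (TG.adjoint (Tinv (lp.single 2 0 (eVec m b)))) i a :=
  bezout_corona_stmt5_general m p G TG hTG HG hHG Tinv hT1 hT2 Ξ₀ hΞ₀ Y hY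
end
end

section
/- Let G ∈ H^∞_{m×p} with T_G T_G* strictly positive, and let Y_0, Y_1, Y_2, … be the Taylor coefficients at zero of the function Y. Then for every j ≥ 0 the series ∑_{i=0}^∞ Y_i* Y_{i+j} converges, and it equals I_p + E_p* H_G* (T_G T_G*)⁻¹ H_G E_p when j = 0, and equals −G₀* E_m* (S_m*)^{j−1} (T_G T_G*)⁻¹ H_G E_p when j ≥ 1, where G₀ = G(0). -/
/-!
Setting: `l2 n` models ℓ²₊(ℂⁿ); `lp.single 2 0` is the canonical embedding `E_n`, and
evaluating a sequence at coordinate `k` realizes `E_n* (S_n*)^k`.  Block Toeplitz and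
Hankel operators, as well as the (bounded) inverse of `T_G T_G*`, are specified through
their actions on the standard basis vectors of the coordinate spaces.
-/

noncomputable section
open scoped Matrix

/-!
Put `x_b = (T_G T_G*)⁻¹ H_G E_p e_b`, so that column `b` of `Y_{ν+1}` is `-(T_G* x_b)_ν`. The
tail `∑_{i ≥ 1} Y_i* Y_{i+j}` then has entries `⟨S^j T_G* x_a, T_G* x_b⟩`; as the block Toeplitz
operator `T_G` commutes with the shift `S` and `T_G T_G* x_a = H_G E_p e_a`, this is
`⟨S^j H_G E_p e_a, x_b⟩`. For `j = 0` it is the Hankel term. For `j ≥ 1` the relation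
`S H_G E_p = T_G E_p - E_m G₀` gives `S^j H_G E_p = T_G S^{j-1} E_p - S^{j-1} E_m G₀`: the
`T_G` part cancels the `i = 0` term `Y_j`, and what remains is `-G₀* E_m* (S_m*)^{j-1} x_b`.
-/

open scoped ENNReal InnerProductSpace

namespace lp

section Shift

variable {𝕜 E : Type*} [NontriviallyNormedField 𝕜] [NormedAddCommGroup E] [NormedSpace 𝕜 E]

def shiftSeq (x : ℕ → E) : ℕ → E
  | 0 => 0
  | k + 1 => x k

lemma memℓp_shiftSeq {x : ℕ → E} (hx : Memℓp x 2) : Memℓp (shiftSeq x) 2 :=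
  memℓp_gen <| (summable_nat_add_iff 1).1 (hx.summable (by norm_num))

lemma norm_mk_shiftSeq (x : lp (fun _ : ℕ => E) 2) :
    ‖(⟨shiftSeq x, memℓp_shiftSeq (lp.memℓp x)⟩ : lp (fun _ : ℕ => E) 2)‖ = ‖x‖ := by
  have h2 : 0 < (2 : ℝ≥0∞).toReal := by norm_num
  rw [lp.norm_eq_tsum_rpow h2, lp.norm_eq_tsum_rpow h2,
    ((memℓp_shiftSeq (lp.memℓp x)).summable h2).tsum_eq_zero_add]
  simp [shiftSeq]

variable (𝕜 E) in
def shiftRight : lp (fun _ : ℕ => E) 2 →L[𝕜] lp (fun _ : ℕ => E) 2 :=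
  LinearMap.mkContinuous
    { toFun x := ⟨shiftSeq x, memℓp_shiftSeq (lp.memℓp x)⟩
      map_add' x y := lp.ext <| by
        change shiftSeq ⇑(x + y) = shiftSeq ⇑x + shiftSeq ⇑y
        ext (_ | k) <;> simp [shiftSeq]
      map_smul' c x := lp.ext <| by
        change shiftSeq ⇑(c • x) = c • shiftSeq ⇑x
        ext (_ | k) <;> simp [shiftSeq] }
    1 fun x => by simp [norm_mk_shiftSeq]

@[simp]
lemma shiftRight_apply_zero (x : lp (fun _ : ℕ => E) 2) : shiftRight 𝕜 E x 0 = 0 := rfl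

@[simp]
lemma shiftRight_apply_succ (x : lp (fun _ : ℕ => E) 2) (k : ℕ) :
    shiftRight 𝕜 E x (k + 1) = x k := rfl

lemma shiftRight_single (k : ℕ) (v : E) :
    shiftRight 𝕜 E (lp.single 2 k v) = lp.single 2 (k + 1) v := by
  ext (_ | i)
  · simp [lp.single_apply]
  · simp [lp.single_apply, Pi.single_apply]

lemma shiftRight_pow_single (j k : ℕ) (v : E) :
    (shiftRight 𝕜 E ^ j) (lp.single 2 k v) = lp.single 2 (k + j) v := by
  induction j with
  | zero => simp
  | succ j ih => rw [pow_succ', mul_apply_eq_comp, ih, shiftRight_single, add_assoc]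

lemma shiftRight_pow_apply_add (j : ℕ) (x : lp (fun _ : ℕ => E) 2) (k : ℕ) :
    (shiftRight 𝕜 E ^ j) x (k + j) = x k := by
  induction j with
  | zero => simp
  | succ j ih => rw [pow_succ', mul_apply_eq_comp, ← add_assoc, shiftRight_apply_succ, ih]

lemma shiftRight_pow_apply_of_lt {j k : ℕ} (hk : k < j) (x : lp (fun _ : ℕ => E) 2) :
    (shiftRight 𝕜 E ^ j) x k = 0 := by
  induction j generalizing k with
  | zero => omega
  | succ j ih =>
    rw [pow_succ', mul_apply_eq_comp]
    cases k with
    | zero => rfl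
    | succ k => exact ih (by omega)

end Shift

lemma hasSum_inner_shiftRight_pow {𝕜 E : Type*} [RCLike 𝕜] [NormedAddCommGroup E]
    [InnerProductSpace 𝕜 E] (j : ℕ) (x y : lp (fun _ : ℕ => E) 2) :
    HasSum (fun i => ⟪x i, y (i + j)⟫_𝕜) ⟪(shiftRight 𝕜 E ^ j) x, y⟫_𝕜 := by
  have h := (add_left_injective j).hasSum_iff (a := ⟪(shiftRight 𝕜 E ^ j) x, y⟫_𝕜)
    (f := fun k => ⟪(shiftRight 𝕜 E ^ j) x k, y k⟫_𝕜) (fun k hk => by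
      rw [shiftRight_pow_apply_of_lt (not_le.1 fun hjk => hk ⟨k - j, Nat.sub_add_cancel hjk⟩),
        inner_zero_left])
  simpa only [Function.comp_def, shiftRight_pow_apply_add] using h.2 (lp.hasSum_inner _ y)

end lp

lemma Matrix.conjTranspose_mul_apply_eq_inner {𝕜 ι κ : Type*} [RCLike 𝕜] [Fintype ι]
    (M N : Matrix ι κ 𝕜) (a b : κ) :
    (Mᴴ * N) a b =
      ⟪(WithLp.toLp 2 fun c => M c a : EuclideanSpace 𝕜 ι), WithLp.toLp 2 fun c => N c b⟫_𝕜 := by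
  simp [Matrix.mul_apply, EuclideanSpace.inner_toLp_toLp, dotProduct, mul_comm]

lemma lp.ext_single_euclideanSingle {𝕜 ι F : Type*} [RCLike 𝕜] [Fintype ι] [DecidableEq ι]
    [NormedAddCommGroup F] [NormedSpace 𝕜 F]
    {f g : lp (fun _ : ℕ => EuclideanSpace 𝕜 ι) 2 →L[𝕜] F}
    (h : ∀ k b, f (lp.single 2 k (EuclideanSpace.single b 1)) =
      g (lp.single 2 k (EuclideanSpace.single b 1))) : f = g :=
  lp.ext_continuousLinearMap ENNReal.ofNat_ne_top fun k =>
    ContinuousLinearMap.coe_injective <| (EuclideanSpace.basisFun ι 𝕜).toBasis.ext fun b => by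
      simpa using h k b

lemma inner_single_eVec_left {n : ℕ} (k : ℕ) (a : Fin n) (x : l2 n) :
    ⟪lp.single 2 k (eVec n a), x⟫_ℂ = x k a := by
  simp [lp.inner_single_left, EuclideanSpace.inner_single_left]

section Toeplitz

variable {m p : ℕ}

def IsBlockToeplitz (G : ℕ → Matrix (Fin m) (Fin p) ℂ) (T : l2 p →L[ℂ] l2 m) : Prop :=
  ∀ (j : ℕ) (b : Fin p) (i : ℕ) (a : Fin m),
    (T (lp.single 2 j (eVec p b))) i a = if j ≤ i then G (i - j) a b else 0

def IsBlockHankel (G : ℕ → Matrix (Fin m) (Fin p) ℂ) (H : l2 p →L[ℂ] l2 m) : Prop :=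
  ∀ (j : ℕ) (b : Fin p) (i : ℕ) (a : Fin m), (H (lp.single 2 j (eVec p b))) i a = G (i + j + 1) a b

variable {G : ℕ → Matrix (Fin m) (Fin p) ℂ} {TG HG : l2 p →L[ℂ] l2 m}

lemma IsBlockToeplitz.apply_shiftRight (hT : IsBlockToeplitz G TG) (v : l2 p) :
    TG (lp.shiftRight ℂ (ES p) v) = lp.shiftRight ℂ (ES m) (TG v) := by
  have hcomm : TG ∘L lp.shiftRight ℂ (ES p) = lp.shiftRight ℂ (ES m) ∘L TG := by
    refine lp.ext_single_euclideanSingle fun k b => ?_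
    ext (_ | i) a
    · simp [lp.shiftRight_single, hT _ b]
    · simp [lp.shiftRight_single, hT _ b, Nat.add_sub_add_right]
  exact DFunLike.congr_fun hcomm v

lemma IsBlockToeplitz.apply_shiftRight_pow (hT : IsBlockToeplitz G TG) (j : ℕ) (v : l2 p) :
    TG ((lp.shiftRight ℂ (ES p) ^ j) v) = (lp.shiftRight ℂ (ES m) ^ j) (TG v) := by
  induction j with
  | zero => rfl
  | succ j ih => simp only [pow_succ', mul_apply_eq_comp, hT.apply_shiftRight, ih]

lemma shiftRight_hankel_single_zero (hT : IsBlockToeplitz G TG) (hH : IsBlockHankel G HG)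
    (b : Fin p) :
    lp.shiftRight ℂ (ES m) (HG (lp.single 2 0 (eVec p b))) =
      TG (lp.single 2 0 (eVec p b)) - lp.single 2 0 (WithLp.toLp 2 (fun a => G 0 a b) : ES m) := by
  ext (_ | i) a
  · simp [hT 0 b]
  · simp [hT 0 b, hH 0 b, lp.single_apply]

lemma shiftRight_pow_succ_hankel_single_zero (hT : IsBlockToeplitz G TG)
    (hH : IsBlockHankel G HG) (t : ℕ) (b : Fin p) :
    (lp.shiftRight ℂ (ES m) ^ (t + 1)) (HG (lp.single 2 0 (eVec p b))) =
      TG (lp.single 2 t (eVec p b)) - lp.single 2 t (WithLp.toLp 2 (fun a => G 0 a b) : ES m) := by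
  rw [pow_succ, mul_apply_eq_comp, shiftRight_hankel_single_zero hT hH, map_sub,
    ← hT.apply_shiftRight_pow, lp.shiftRight_pow_single, lp.shiftRight_pow_single, zero_add]

lemma hasSum_conjTranspose_mul_apply {Tinv : l2 m →L[ℂ] l2 m} {h : Fin p → l2 m}
    {Yc : ℕ → Matrix (Fin p) (Fin p) ℂ} (hT : IsBlockToeplitz G TG)
    (hTinv : ∀ x, TG (TG.adjoint (Tinv x)) = x) (hY0 : Yc 0 = 1)
    (hY : ∀ ν a b, Yc (ν + 1) a b = -(TG.adjoint (Tinv (h b))) ν a) (j : ℕ) (a b : Fin p) :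
    HasSum (fun i => ((Yc i)ᴴ * Yc (i + j)) a b)
      (⟪(lp.shiftRight ℂ (ES m) ^ j) (h a), Tinv (h b)⟫_ℂ + Yc j a b) := by
  have hcol : ∀ ν b, (WithLp.toLp 2 fun c => Yc (ν + 1) c b) = -(TG.adjoint (Tinv (h b))) ν :=
    fun ν b => by ext c; simp [hY]
  have htail := lp.hasSum_inner_shiftRight_pow (𝕜 := ℂ) j (TG.adjoint (Tinv (h a)))
    (TG.adjoint (Tinv (h b)))
  rw [ContinuousLinearMap.adjoint_inner_right, hT.apply_shiftRight_pow, hTinv] at htail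
  have hsum := (hasSum_nat_add_iff (f := fun i => ((Yc i)ᴴ * Yc (i + j)) a b) 1).1 (by
    simpa only [Matrix.conjTranspose_mul_apply_eq_inner, hcol, inner_neg_neg, add_right_comm]
      using htail)
  rwa [Finset.sum_range_one, hY0, zero_add, Matrix.conjTranspose_one, one_mul] at hsum

end Toeplitz

theorem bezout_corona_stmt7_general
    (m p : ℕ)
    (G : ℕ → Matrix (Fin m) (Fin p) ℂ)
    (TG : l2 p →L[ℂ] l2 m)
    (hTG : ∀ (j : ℕ) (b : Fin p) (i : ℕ) (a : Fin m),
      (TG (lp.single 2 j (eVec p b))) i a = if j ≤ i then G (i - j) a b else 0)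
    (HG : l2 p →L[ℂ] l2 m)
    (hHG : ∀ (j : ℕ) (b : Fin p) (i : ℕ) (a : Fin m),
      (HG (lp.single 2 j (eVec p b))) i a = G (i + j + 1) a b)
    (Tinv : l2 m →L[ℂ] l2 m)
    (hT2 : ∀ x, TG (TG.adjoint (Tinv x)) = x)
    (Yc : ℕ → Matrix (Fin p) (Fin p) ℂ)
    (hYc0 : Yc 0 = 1)
    (hYc : ∀ (ν : ℕ) (a b : Fin p),
      Yc (ν + 1) a b = -(TG.adjoint (Tinv (HG (lp.single 2 0 (eVec p b))))) ν a) :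
    HasSum (fun i => (Yc i)ᴴ * Yc i)
      (1 + Matrix.of fun a b : Fin p =>
        (HG.adjoint (Tinv (HG (lp.single 2 0 (eVec p b))))) 0 a) ∧
    ∀ j : ℕ, 1 ≤ j →
      HasSum (fun i => (Yc i)ᴴ * Yc (i + j))
        (Matrix.of fun a b : Fin p =>
          -∑ c : Fin m, (starRingEnd ℂ) (G 0 c a) *
            (Tinv (HG (lp.single 2 0 (eVec p b)))) (j - 1) c) := by
  have hsum := hasSum_conjTranspose_mul_apply hTG hT2 hYc0 hYc
  refine ⟨Pi.hasSum.2 fun a => Pi.hasSum.2 fun b => ?_,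
    fun j hj => Pi.hasSum.2 fun a => Pi.hasSum.2 fun b => ?_⟩
  · have hj0 := hsum 0 a b
    rw [pow_zero, one_apply_eq_self, ← ContinuousLinearMap.adjoint_inner_right,
      inner_single_eVec_left, hYc0] at hj0
    simpa [add_comm] using hj0
  · obtain ⟨t, rfl⟩ := Nat.exists_eq_add_of_le' hj
    have hj1 := hsum (t + 1) a b
    rw [shiftRight_pow_succ_hankel_single_zero hTG hHG, hYc, ← inner_single_eVec_left,
      ContinuousLinearMap.adjoint_inner_right, inner_sub_left, lp.inner_single_left,
      sub_add_eq_add_sub, add_neg_cancel, zero_sub, PiLp.inner_apply] at hj1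
    simpa [RCLike.inner_apply, mul_comm] using hj1

/-- For the Taylor coefficients `Y_ν` of `Y` (so `Y₀ = I_p` and
`Y_{ν+1} = −E_p*(S_p*)^ν T_G*(T_G T_G*)⁻¹ H_G E_p`), the series `∑_{i} Y_i* Y_{i+j}`
converges for every `j ≥ 0`; it equals `I_p + E_p* H_G* (T_G T_G*)⁻¹ H_G E_p` when
`j = 0` and `−G₀* E_m* (S_m*)^{j−1} (T_G T_G*)⁻¹ H_G E_p` when `j ≥ 1`. -/
theorem bezout_corona_stmt7
    (m p : ℕ) (hm : 0 < m) (hmp : m ≤ p)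
    (G : ℕ → Matrix (Fin m) (Fin p) ℂ)
    (TG : l2 p →L[ℂ] l2 m)
    (hTG : ∀ (j : ℕ) (b : Fin p) (i : ℕ) (a : Fin m),
      (TG (lp.single 2 j (eVec p b))) i a = if j ≤ i then G (i - j) a b else 0)
    (HG : l2 p →L[ℂ] l2 m)
    (hHG : ∀ (j : ℕ) (b : Fin p) (i : ℕ) (a : Fin m),
      (HG (lp.single 2 j (eVec p b))) i a = G (i + j + 1) a b)
    (Tinv : l2 m →L[ℂ] l2 m)
    (hT1 : ∀ x, Tinv (TG (TG.adjoint x)) = x)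
    (hT2 : ∀ x, TG (TG.adjoint (Tinv x)) = x)
    (Yc : ℕ → Matrix (Fin p) (Fin p) ℂ)
    (hYc0 : Yc 0 = 1)
    (hYc : ∀ (ν : ℕ) (a b : Fin p),
      Yc (ν + 1) a b = -(TG.adjoint (Tinv (HG (lp.single 2 0 (eVec p b))))) ν a) :
    HasSum (fun i => (Yc i)ᴴ * Yc i)
      (1 + Matrix.of fun a b : Fin p =>
        (HG.adjoint (Tinv (HG (lp.single 2 0 (eVec p b))))) 0 a) ∧
    ∀ j : ℕ, 1 ≤ j →
      HasSum (fun i => (Yc i)ᴴ * Yc (i + j))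
        (Matrix.of fun a b : Fin p =>
          -∑ c : Fin m, (starRingEnd ℂ) (G 0 c a) *
            (Tinv (HG (lp.single 2 0 (eVec p b)))) (j - 1) c) :=
  bezout_corona_stmt7_general m p G TG hTG HG hHG Tinv hT2 Yc hYc0 hYc
end
end
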